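/- The function M(x) := x·φ(x)/(2Φ(x) - 1) is strictly decreasing on (0, ∞). -/

import Mathlib

noncomputable def stdPhi (x : ℝ) : ℝ := (Real.sqrt (2 * Real.pi))⁻¹ * Real.exp (-x ^ 2 / 2)

noncomputable def stdCDF (x : ℝ) : ℝ := ∫ t in Set.Iic x, stdPhi t

open Real MeasureTheory Set intervalIntegral

lemma stdPhi_pos (x : ℝ) : 0 < stdPhi x := by
  have h : 0 < Real.sqrt (2 * Real.pi) := Real.sqrt_pos.2 (by positivity)
  exact mul_pos (inv_pos.2 h) (Real.exp_pos _)

lemma continuous_stdPhi : Continuous stdPhi := by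
  unfold stdPhi; fun_prop

lemma integrable_stdPhi : Integrable stdPhi := by
  have h : Integrable (fun x : ℝ => Real.exp (-(1/2 : ℝ) * x ^ 2)) :=
    integrable_exp_neg_mul_sq (by norm_num)
  have h2 := h.const_mul (Real.sqrt (2 * Real.pi))⁻¹
  refine h2.congr (Filter.Eventually.of_forall fun x => ?_)
  unfold stdPhi; ring_nf

lemma hasDerivAt_stdPhi (x : ℝ) : HasDerivAt stdPhi (-(x * stdPhi x)) x := by
  have h1 : HasDerivAt (fun y : ℝ => -y ^ 2 / 2) (-x) x := by
    have := ((hasDerivAt_pow 2 x).neg).div_const 2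
    refine this.congr_deriv ?_; ring
  have h2 := (h1.exp).const_mul (Real.sqrt (2 * Real.pi))⁻¹
  refine (show HasDerivAt stdPhi _ x from h2).congr_deriv ?_
  unfold stdPhi; ring

lemma stdCDF_eq (y : ℝ) : stdCDF y = stdCDF 0 + ∫ t in (0:ℝ)..y, stdPhi t := by
  have h := integral_Iic_sub_Iic (integrable_stdPhi.integrableOn)
    (integrable_stdPhi.integrableOn) (a := 0) (b := y)
  unfold stdCDF
  linarith [h]

lemma hasDerivAt_stdCDF (x : ℝ) : HasDerivAt stdCDF (stdPhi x) x := by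
  have h : HasDerivAt (fun y => ∫ t in (0:ℝ)..y, stdPhi t) (stdPhi x) x :=
    integral_hasDerivAt_right (integrable_stdPhi.intervalIntegrable)
      (continuous_stdPhi.aestronglyMeasurable.stronglyMeasurableAtFilter)
      continuous_stdPhi.continuousAt
  have h2 := h.const_add (stdCDF 0)
  have : (fun y => stdCDF 0 + ∫ t in (0:ℝ)..y, stdPhi t) = stdCDF :=
    funext fun y => (stdCDF_eq y).symm
  rwa [this] at h2

lemma stdCDF_zero : stdCDF 0 = 1 / 2 := by
  have heven : ∀ x : ℝ, stdPhi (-x) = stdPhi x := by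
    intro x; unfold stdPhi; ring_nf
  have h1 : (∫ x in Iic (0:ℝ), stdPhi x) = ∫ x in Ioi (0:ℝ), stdPhi x := by
    have h := integral_comp_neg_Iic 0 stdPhi
    simp only [heven, neg_zero] at h
    exact h
  have h2 : (∫ x in Iic (0:ℝ), stdPhi x) + (∫ x in Ioi (0:ℝ), stdPhi x) = ∫ x : ℝ, stdPhi x :=
    integral_Iic_add_Ioi integrable_stdPhi.integrableOn integrable_stdPhi.integrableOn
  have h3 : (∫ x : ℝ, stdPhi x) = 1 := by
    unfold stdPhi
    rw [MeasureTheory.integral_const_mul]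
    have : (∫ x : ℝ, Real.exp (-x ^ 2 / 2)) = ∫ x : ℝ, Real.exp (-(1/2 : ℝ) * x ^ 2) := by
      congr 1; funext x; ring_nf
    rw [this, integral_gaussian]
    have hπ : Real.sqrt (Real.pi / (1/2)) = Real.sqrt (2 * Real.pi) := by norm_num; ring_nf
    rw [hπ, inv_mul_cancel₀ (ne_of_gt (Real.sqrt_pos.2 (by positivity)))]
  show (∫ t in Iic (0:ℝ), stdPhi t) = 1/2
  linarith [h1, h2, h3]

lemma denom_pos {x : ℝ} (hx : 0 < x) : 0 < 2 * stdCDF x - 1 := by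
  have h := stdCDF_eq x
  have hpos : 0 < ∫ t in (0:ℝ)..x, stdPhi t :=
    intervalIntegral_pos_of_pos (integrable_stdPhi.intervalIntegrable) stdPhi_pos hx
  rw [stdCDF_zero] at h
  linarith

noncomputable def gAux (x : ℝ) : ℝ := 2 * x * stdPhi x - (1 - x ^ 2) * (2 * stdCDF x - 1)

lemma hasDerivAt_gAux (x : ℝ) : HasDerivAt gAux (2 * x * (2 * stdCDF x - 1)) x := by
  have h1 : HasDerivAt (fun y : ℝ => 2 * y * stdPhi y)
      (2 * stdPhi x + 2 * x * (-(x * stdPhi x))) x := by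
    have := ((hasDerivAt_id x).const_mul 2).mul (hasDerivAt_stdPhi x)
    refine this.congr_deriv ?_; simp only [id_eq]; ring
  have h2 : HasDerivAt (fun y : ℝ => (1 - y ^ 2) * (2 * stdCDF y - 1))
      ((-(2 * x)) * (2 * stdCDF x - 1) + (1 - x ^ 2) * (2 * stdPhi x)) x := by
    have ha : HasDerivAt (fun y : ℝ => 1 - y ^ 2) (-(2 * x)) x := by
      have := (hasDerivAt_pow 2 x).const_sub 1
      refine this.congr_deriv ?_; push_cast; ring
    have hb : HasDerivAt (fun y : ℝ => 2 * stdCDF y - 1) (2 * stdPhi x) x :=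
      ((hasDerivAt_stdCDF x).const_mul 2).sub_const 1
    exact ha.mul hb
  have := h1.sub h2
  refine this.congr_deriv ?_; ring

lemma gAux_pos {x : ℝ} (hx : 0 < x) : 0 < gAux x := by
  have hg0 : gAux 0 = 0 := by simp [gAux, stdCDF_zero]
  have hmono : StrictMonoOn gAux (Ici (0:ℝ)) := by
    apply strictMonoOn_of_deriv_pos (convex_Ici 0)
    · exact fun y _ => ((hasDerivAt_gAux y).continuousAt).continuousWithinAt
    · intro y hy
      rw [interior_Ici] at hy
      rw [(hasDerivAt_gAux y).deriv]
      exact mul_pos (by linarith [hy.out]) (denom_pos hy)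
  have := hmono (self_mem_Ici) (le_of_lt hx : (0:ℝ) ≤ x) hx
  rwa [hg0] at this

theorem Mratio_strictAnti :
    StrictAntiOn (fun x : ℝ => x * stdPhi x / (2 * stdCDF x - 1)) (Set.Ioi 0) := by
  have hD : ∀ x ∈ Set.Ioi (0:ℝ), HasDerivAt (fun x : ℝ => x * stdPhi x / (2 * stdCDF x - 1))
      (((stdPhi x + x * (-(x * stdPhi x))) * (2 * stdCDF x - 1)
        - x * stdPhi x * (2 * stdPhi x)) / (2 * stdCDF x - 1) ^ 2) x := by
    intro x hx
    have hnum : HasDerivAt (fun y : ℝ => y * stdPhi y) (stdPhi x + x * (-(x * stdPhi x))) x := by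
      have := (hasDerivAt_id x).mul (hasDerivAt_stdPhi x)
      refine this.congr_deriv ?_; simp only [id_eq]; ring
    have hden : HasDerivAt (fun y : ℝ => 2 * stdCDF y - 1) (2 * stdPhi x) x :=
      ((hasDerivAt_stdCDF x).const_mul 2).sub_const 1
    have := hnum.div hden (ne_of_gt (denom_pos hx))
    exact this
  apply strictAntiOn_of_deriv_neg (convex_Ioi 0)
  · exact fun x hx => ((hD x hx).continuousAt).continuousWithinAt
  · intro x hx
    rw [interior_Ioi] at hx
    rw [(hD x hx).deriv]
    apply div_neg_of_neg_of_pos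
    · have hg := gAux_pos hx
      have hφ := stdPhi_pos x
      have : (stdPhi x + x * (-(x * stdPhi x))) * (2 * stdCDF x - 1)
          - x * stdPhi x * (2 * stdPhi x) = -(stdPhi x * gAux x) := by
        unfold gAux; ring
      rw [this]
      linarith [mul_pos hφ hg]
    · exact pow_pos (denom_pos hx) 2
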